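/- Let n ≥ 1, let g : ℝⁿ → ℝ be continuously differentiable, let x ∈ S^{n−1}, let σ ∈ (0,1), and set η = −Proj_x(∇g(x)) = −(∇g(x) − ⟨∇g(x), x⟩x). Then there exists α > 0 such that for all t ∈ (0, α), g((x + tη)/‖x + tη‖) ≤ g(x) − t σ ‖η‖². In particular, the Armijo backtracking line search along the retraction R_x(ξ) = (x + ξ)/‖x + ξ‖ with search direction η is well defined: for any β ∈ (0,1) and ᾱ > 0 there is a smallest nonnegative integer m with g((x + β^m ᾱ η)/‖x + β^m ᾱ η‖) ≤ g(x) − σ β^m ᾱ ‖η‖². -/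

import Mathlib

open Filter Topology

/-- The orthogonal projection onto the tangent space of the unit sphere at `x`:
`Proj_x(v) = v − ⟨v, x⟩x`. -/
noncomputable def sphereProj {n : ℕ} (x v : EuclideanSpace ℝ (Fin n)) :
    EuclideanSpace ℝ (Fin n) :=
  v - (inner ℝ v x : ℝ) • x

/-!
Along the retraction curve `c t = (x + t η)/‖x + t η‖` we have `c 0 = x` and `c' 0 = Proj_x η`,
so `(g ∘ c)' 0 = ⟪∇g x, Proj_x η⟫ = ⟪Proj_x ∇g x, η⟫ = -‖η‖²` because `Proj_x` is symmetric.
For `η ≠ 0` and `σ < 1` this slope lies strictly below `-σ‖η‖²`, so the Armijo inequality holds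
on an interval `(0, α)` (for `η = 0` the curve is constant). The backtracking steps `βᵐ ᾱ` tend to
`0`, hence eventually enter that interval, and the least such `m` exists.
-/

open Set

theorem hasDerivAt_normalize_add_smul {E : Type*} [NormedAddCommGroup E] [InnerProductSpace ℝ E]
    {x : E} (hx : ‖x‖ = 1) (v : E) :
    HasDerivAt (fun t : ℝ => ‖x + t • v‖⁻¹ • (x + t • v)) (v - inner ℝ v x • x) 0 := by
  have hline : HasDerivAt (fun t : ℝ => x + t • v) v 0 := by
    simpa using ((hasDerivAt_id (0 : ℝ)).smul_const v).const_add x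
  have hnorm : HasDerivAt (fun t : ℝ => ‖x + t • v‖) (inner ℝ x v) 0 := by
    have h := hline.norm_sq.sqrt (by simp [hx])
    simp only [Real.sqrt_sq (norm_nonneg _)] at h
    convert h using 1
    simp [hx]
  have hinv : HasDerivAt (fun t : ℝ => ‖x + t • v‖⁻¹) (-inner ℝ x v) 0 :=
    (hnorm.inv (by simp [hx])).congr_deriv (by simp [hx])
  exact (hinv.smul hline).congr_deriv (by simp [hx, real_inner_comm, sub_eq_add_neg])

theorem HasDerivAt.exists_lt_add_mul_sub_of_lt {φ : ℝ → ℝ} {d s a : ℝ} (hφ : HasDerivAt φ d a)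
    (hds : d < s) : ∃ b > a, ∀ t ∈ Ioo a b, φ t < φ a + s * (t - a) := by
  have hslope : ∀ᶠ t in 𝓝[>] a, slope φ a t < s :=
    hφ.hasDerivWithinAt.limsup_slope_le' (lt_irrefl a) hds
  obtain ⟨b, hab, hb⟩ := mem_nhdsGT_iff_exists_Ioo_subset.mp hslope
  refine ⟨b, hab, fun t ht => ?_⟩
  have h : slope φ a t < s := hb ht
  rw [slope_def_field, div_lt_iff₀ (sub_pos.mpr ht.1)] at h
  linarith

theorem exists_least_pow_mul_of_forall_Ioo {P : ℝ → Prop} {α β c : ℝ} (hα : 0 < α)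
    (hP : ∀ t ∈ Ioo 0 α, P t) (hβ0 : 0 < β) (hβ1 : β < 1) (hc : 0 < c) :
    ∃ m : ℕ, P (β ^ m * c) ∧ ∀ j < m, ¬ P (β ^ j * c) := by
  classical
  have hex : ∃ m : ℕ, P (β ^ m * c) := by
    obtain ⟨m, hm⟩ := exists_pow_lt_of_lt_one (div_pos hα hc) hβ1
    exact ⟨m, hP _ ⟨by positivity, (lt_div_iff₀ hc).mp hm⟩⟩
  exact ⟨Nat.find hex, Nat.find_spec hex, fun j hj => Nat.find_min hex hj⟩

theorem inner_sphereProj_left {n : ℕ} (x v w : EuclideanSpace ℝ (Fin n)) :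
    inner ℝ (sphereProj x v) w = inner ℝ v (sphereProj x w) := by
  simp only [sphereProj, inner_sub_left, inner_sub_right, inner_smul_left, inner_smul_right,
    real_inner_comm, RCLike.conj_to_real]
  ring

theorem exists_armijo_step_sphere {n : ℕ} {g : EuclideanSpace ℝ (Fin n) → ℝ}
    {x : EuclideanSpace ℝ (Fin n)} (hg : DifferentiableAt ℝ g x) (hx : ‖x‖ = 1) {σ : ℝ}
    (hσ1 : σ < 1) {η : EuclideanSpace ℝ (Fin n)} (hη : η = -sphereProj x (gradient g x)) :
    ∃ α > (0 : ℝ), ∀ t : ℝ, 0 < t → t < α →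
      g (‖x + t • η‖⁻¹ • (x + t • η)) ≤ g x - t * σ * ‖η‖ ^ 2 := by
  obtain rfl | hη0 := eq_or_ne η 0
  · exact ⟨1, one_pos, fun t _ _ => by simp [hx]⟩
  have hcurve : HasDerivAt (fun t : ℝ => ‖x + t • η‖⁻¹ • (x + t • η)) (sphereProj x η) 0 :=
    hasDerivAt_normalize_add_smul hx η
  have hdescent : inner ℝ (gradient g x) (sphereProj x η) = -‖η‖ ^ 2 := by
    rw [← inner_sphereProj_left, ← neg_neg (sphereProj x _), ← hη, inner_neg_left,
      real_inner_self_eq_norm_sq]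
  have hφ : HasDerivAt (fun t : ℝ => g (‖x + t • η‖⁻¹ • (x + t • η))) (-‖η‖ ^ 2) 0 := by
    have h := hg.hasGradientAt.hasFDerivAt.comp_hasDerivAt_of_eq 0 hcurve (by simp [hx])
    rwa [InnerProductSpace.toDual_apply_apply, hdescent] at h
  have hslope : -‖η‖ ^ 2 < -(σ * ‖η‖ ^ 2) := by
    nlinarith [pow_pos (norm_pos_iff.mpr hη0) 2]
  obtain ⟨α, hα, hdecrease⟩ := hφ.exists_lt_add_mul_sub_of_lt hslope
  refine ⟨α, hα, fun t ht0 htα => ?_⟩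
  have h := hdecrease t ⟨ht0, htα⟩
  simp only [zero_smul, add_zero, hx, inv_one, one_smul, sub_zero] at h
  linarith

theorem armijo_line_search_well_defined_general (n : ℕ)
    (g : EuclideanSpace ℝ (Fin n) → ℝ) (hg : ContDiff ℝ 1 g)
    (x : EuclideanSpace ℝ (Fin n)) (hx : ‖x‖ = 1)
    (σ : ℝ) (hσ1 : σ < 1)
    (η : EuclideanSpace ℝ (Fin n)) (hη : η = -sphereProj x (gradient g x)) :
    (∃ α > (0 : ℝ), ∀ t : ℝ, 0 < t → t < α →
      g ((‖x + t • η‖)⁻¹ • (x + t • η)) ≤ g x - t * σ * ‖η‖ ^ 2) ∧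
    ∀ β : ℝ, 0 < β → β < 1 → ∀ abar : ℝ, 0 < abar →
      ∃ m : ℕ,
        (g ((‖x + (β ^ m * abar) • η‖)⁻¹ • (x + (β ^ m * abar) • η)) ≤
          g x - σ * (β ^ m * abar) * ‖η‖ ^ 2) ∧
        ∀ j : ℕ, j < m →
          ¬ (g ((‖x + (β ^ j * abar) • η‖)⁻¹ • (x + (β ^ j * abar) • η)) ≤
            g x - σ * (β ^ j * abar) * ‖η‖ ^ 2) := by
  obtain ⟨α, hα, hstep⟩ :=
    exists_armijo_step_sphere (hg.differentiable one_ne_zero x) hx hσ1 hη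
  refine ⟨⟨α, hα, hstep⟩, fun β hβ0 hβ1 abar habar => ?_⟩
  refine exists_least_pow_mul_of_forall_Ioo
    (P := fun t => g (‖x + t • η‖⁻¹ • (x + t • η)) ≤ g x - σ * t * ‖η‖ ^ 2)
    hα (fun t ht => ?_) hβ0 hβ1 habar
  linarith [hstep t ht.1 ht.2]

/-- Let `g : ℝⁿ → ℝ` be continuously differentiable, `x ∈ S^{n−1}`, `σ ∈ (0,1)`, and
`η = −Proj_x(∇g(x))`. Then (i) there exists `α > 0` such that for all `t ∈ (0, α)`,
`g((x + tη)/‖x + tη‖) ≤ g(x) − tσ‖η‖²`; and (ii) the Armijo backtracking line search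
along the retraction `R_x(ξ) = (x + ξ)/‖x + ξ‖` is well defined: for any `β ∈ (0,1)`
and `ᾱ > 0` there is a smallest nonnegative integer `m` with
`g((x + βᵐᾱη)/‖x + βᵐᾱη‖) ≤ g(x) − σβᵐᾱ‖η‖²`. -/
theorem armijo_line_search_well_defined (n : ℕ) (hn : 1 ≤ n)
    (g : EuclideanSpace ℝ (Fin n) → ℝ) (hg : ContDiff ℝ 1 g)
    (x : EuclideanSpace ℝ (Fin n)) (hx : ‖x‖ = 1)
    (σ : ℝ) (hσ0 : 0 < σ) (hσ1 : σ < 1)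
    (η : EuclideanSpace ℝ (Fin n)) (hη : η = -sphereProj x (gradient g x)) :
    (∃ α > (0 : ℝ), ∀ t : ℝ, 0 < t → t < α →
      g ((‖x + t • η‖)⁻¹ • (x + t • η)) ≤ g x - t * σ * ‖η‖ ^ 2) ∧
    ∀ β : ℝ, 0 < β → β < 1 → ∀ abar : ℝ, 0 < abar →
      ∃ m : ℕ,
        (g ((‖x + (β ^ m * abar) • η‖)⁻¹ • (x + (β ^ m * abar) • η)) ≤
          g x - σ * (β ^ m * abar) * ‖η‖ ^ 2) ∧
        ∀ j : ℕ, j < m →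
          ¬ (g ((‖x + (β ^ j * abar) • η‖)⁻¹ • (x + (β ^ j * abar) • η)) ≤
            g x - σ * (β ^ j * abar) * ‖η‖ ^ 2) :=
  armijo_line_search_well_defined_general n g hg x hx σ hσ1 η hη
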